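/- arXiv:1805.04884 — 2 statements merged into one kernel-verified Lean document; each statement's English description precedes it below -/
import Mathlib

section
/- Let A ∈ ℕ^m and D_A the set of minimal-inversion left coset representatives of the stabilizer H_A ≤ S_m. For any τ, τ' ∈ D_A there exists a finite sequence τ_0 = τ', τ_1, ..., τ_l = τ with all τ_j ∈ D_A such that τ_{j+1} τ_j^{-1} is a transposition for each 0 ≤ j < l. -/
/-- number of inversions of a permutation of Fin m -/
def invNum {m : ℕ} (σ : Equiv.Perm (Fin m)) : ℕ :=
  (Finset.univ.filter (fun p : Fin m × Fin m => p.1 < p.2 ∧ σ p.2 < σ p.1)).card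

/-- membership in D_A: minimal inversions in its left coset of the stabilizer H_A -/
def inDA {m : ℕ} (A : Fin m → ℕ) (σ : Equiv.Perm (Fin m)) : Prop :=
  ∀ ρ : Equiv.Perm (Fin m),
    (∃ ξ : Equiv.Perm (Fin m), (∀ l, A (ξ l) = A l) ∧ ρ = σ * ξ) →
    invNum σ ≤ invNum ρ

/-!
Call `σ` block-increasing if it is increasing on every fibre of `A`. Exchanging two entries of a
fibre that `σ` puts in the wrong order strictly lowers the number of inversions, so `D_A` consists
exactly of the block-increasing permutations; there is one in each coset `σ H_A`, determined by the
word `A ∘ σ⁻¹`. Transposing two adjacent values `a ⋖ b` that carry different letters keeps `σ`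
block-increasing and swaps two adjacent letters of its word. Bubble-sorting the word of `τ` thus
gives a chain in `D_A` ending at the unique element with sorted word, and the same holds for `τ'`.
-/

open Equiv Finset Relation

theorem Relation.ReflTransGen.exists_nat_chain {α : Type*} {r : α → α → Prop} {a b : α}
    (h : ReflTransGen r a b) :
    ∃ (l : ℕ) (f : ℕ → α), f 0 = a ∧ f l = b ∧ ∀ j < l, r (f j) (f (j + 1)) := by
  induction h using Relation.ReflTransGen.head_induction_on with
  | refl => exact ⟨0, fun _ => b, rfl, rfl, by simp⟩
  | @head a c hac _ ih =>
    obtain ⟨l, f, hf0, hfl, hf⟩ := ih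
    refine ⟨l + 1, fun j => Nat.casesOn j a f, rfl, hfl, ?_⟩
    rintro (_ | j) hj
    · simpa [hf0] using hac
    · exact hf j (by omega)

theorem swap_lt_swap_of_covBy {α : Type*} [LinearOrder α] {a b x y : α} (hab : a ⋖ b)
    (hxy : x < y) (hne : ¬(x = a ∧ y = b)) : swap a b x < swap a b y := by
  have hlt := hab.lt
  have h1 : ∀ c, a < c → b ≤ c := fun c hc => not_lt.1 fun h => hab.2 hc h
  have h2 : ∀ c, c < b → c ≤ a := fun c hc => not_lt.1 fun h => hab.2 h hc
  simp only [swap_apply_def]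
  grind

theorem apply_swap_of_eq {α β : Type*} [DecidableEq α] {A : α → β} {i j : α}
    (hA : A i = A j) (l : α) : A (swap i j l) = A l := by
  rw [swap_apply_def]
  split_ifs <;> simp_all

section Inversions

variable {ι α : Type*} [Fintype ι] [LinearOrder ι] [LinearOrder α]

def inversions (w : ι → α) : Finset (ι × ι) :=
  univ.filter fun p => p.1 < p.2 ∧ w p.2 < w p.1

theorem card_inversions_comp_swap_lt {w : ι → α} {i j : ι} (hij : i < j) (hw : w j < w i) :
    #(inversions (w ∘ swap i j)) < #(inversions w) := by
  -- `Φ` relabels an inversion by `swap i j` unless that reverses it; a reversed pair lies in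
  -- `[i, j]` and meets `{i, j}`, and since `w j < w i` it is then already an inversion of `w`.
  let Φ : ι × ι → ι × ι := fun p =>
    if swap i j p.1 < swap i j p.2 then (swap i j p.1, swap i j p.2) else p
  have hmaps : ∀ p ∈ inversions (w ∘ swap i j), Φ p ∈ (inversions w).erase (i, j) := by
    rintro ⟨x, y⟩ hxy
    simp only [inversions, mem_filter, mem_univ, true_and, Function.comp_apply] at hxy
    simp only [Φ, inversions, mem_erase, mem_filter, mem_univ, true_and, ne_eq]
    simp only [swap_apply_def] at hxy ⊢
    grind
  have hinj : Set.InjOn Φ (inversions (w ∘ swap i j)) := by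
    rintro ⟨x, y⟩ hxy ⟨x', y'⟩ hxy' he
    simp only [inversions, coe_filter, mem_univ, true_and, Set.mem_ofPred_eq] at hxy hxy'
    simp only [Φ, swap_apply_def] at he
    grind
  calc #(inversions (w ∘ swap i j)) ≤ #((inversions w).erase (i, j)) :=
        card_le_card_of_injOn Φ hmaps hinj
    _ < #(inversions w) := card_erase_lt_of_mem (by simp [inversions, hij, hw])

end Inversions

theorem invNum_mul_swap_lt {m : ℕ} {σ : Perm (Fin m)} {i j : Fin m} (hij : i < j)
    (hσ : σ j < σ i) : invNum (σ * swap i j) < invNum σ :=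
  card_inversions_comp_swap_lt hij hσ

section BlockIncreasing

variable {ι β : Type*} [LinearOrder ι] {A : ι → β}

def BlockIncreasing (A : ι → β) (σ : Perm ι) : Prop :=
  ∀ ⦃i j⦄, i < j → A i = A j → σ i < σ j

theorem exists_of_not_blockIncreasing {σ : Perm ι} (h : ¬BlockIncreasing A σ) :
    ∃ i j, i < j ∧ A i = A j ∧ σ j < σ i := by
  simp only [BlockIncreasing, not_forall, not_lt] at h
  obtain ⟨i, j, hij, hA, hle⟩ := h
  exact ⟨i, j, hij, hA, hle.lt_of_ne (σ.injective.ne hij.ne')⟩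

theorem BlockIncreasing.eq_one [WellFoundedLT ι] {ξ : Perm ι} (hξ : BlockIncreasing A ξ)
    (hA : ∀ l, A (ξ l) = A l) : ξ = 1 := by
  ext i
  induction i using WellFoundedLT.induction with
  | _ i ih =>
  simp only [Perm.one_apply]
  by_contra hne
  rcases lt_or_gt_of_ne hne with hlt | hgt
  · exact hne (ξ.injective (ih _ hlt))
  · obtain ⟨j, hj⟩ := ξ.surjective i
    rcases lt_trichotomy j i with hji | rfl | hij
    · exact hji.ne ((ih j hji).symm.trans hj)
    · exact hne hj
    · exact (hξ hij (by rw [← hA j, hj])).not_gt (hj ▸ hgt)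

theorem BlockIncreasing.of_mul {σ ξ : Perm ι} (hσ : BlockIncreasing A σ)
    (hσξ : BlockIncreasing A (σ * ξ)) (hA : ∀ l, A (ξ l) = A l) : BlockIncreasing A ξ := by
  intro i j hij hAij
  by_contra hle
  have hlt : ξ j < ξ i := (not_lt.1 hle).lt_of_ne (ξ.injective.ne hij.ne')
  exact (hσ hlt (by rw [hA, hA, hAij])).not_gt (hσξ hij hAij)

theorem BlockIncreasing.eq_one_of_mul [WellFoundedLT ι] {σ ξ : Perm ι}
    (hσ : BlockIncreasing A σ) (hσξ : BlockIncreasing A (σ * ξ)) (hA : ∀ l, A (ξ l) = A l) :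
    ξ = 1 :=
  (hσ.of_mul hσξ hA).eq_one hA

theorem BlockIncreasing.swap_mul {σ : Perm ι} (hσ : BlockIncreasing A σ) {a b : ι}
    (hab : a ⋖ b) (hne : A (σ⁻¹ a) ≠ A (σ⁻¹ b)) : BlockIncreasing A (swap a b * σ) := by
  intro i j hij hA
  refine swap_lt_swap_of_covBy hab (hσ hij hA) ?_
  rintro ⟨rfl, rfl⟩
  simp [hA] at hne

end BlockIncreasing

theorem inDA.blockIncreasing {m : ℕ} {A : Fin m → ℕ} {σ : Perm (Fin m)} (h : inDA A σ) :
    BlockIncreasing A σ := by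
  by_contra hB
  obtain ⟨i, j, hij, hA, hσ⟩ := exists_of_not_blockIncreasing hB
  exact (h _ ⟨swap i j, apply_swap_of_eq hA, rfl⟩).not_gt (invNum_mul_swap_lt hij hσ)

theorem BlockIncreasing.inDA {m : ℕ} {A : Fin m → ℕ} {σ : Perm (Fin m)}
    (hσ : BlockIncreasing A σ) : inDA A σ := by
  intro ρ hρ
  induction hn : invNum ρ using Nat.strong_induction_on generalizing ρ with
  | _ n ih =>
  obtain ⟨ξ, hξ, rfl⟩ := hρ
  subst hn
  by_cases hB : BlockIncreasing A (σ * ξ)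
  · rw [hσ.eq_one_of_mul hB hξ, mul_one]
  obtain ⟨i, j, hij, hA, hji⟩ := exists_of_not_blockIncreasing hB
  have hlt := invNum_mul_swap_lt hij hji
  have hcoset : ∃ ξ', (∀ l, A (ξ' l) = A l) ∧ σ * ξ * swap i j = σ * ξ' :=
    ⟨ξ * swap i j, fun l => by simp [apply_swap_of_eq hA, hξ], mul_assoc _ _ _⟩
  exact (ih _ hlt _ hcoset rfl).trans hlt.le

theorem BlockIncreasing.eq_of_monotone {m : ℕ} {β : Type*} [LinearOrder β] {A : Fin m → β}
    {t t' : Perm (Fin m)} (ht : BlockIncreasing A t) (ht' : BlockIncreasing A t')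
    (hm : Monotone (A ∘ ⇑t⁻¹)) (hm' : Monotone (A ∘ ⇑t'⁻¹)) : t = t' := by
  have hword : A ∘ ⇑t⁻¹ = A ∘ ⇑t'⁻¹ := Tuple.unique_monotone hm hm'
  have hξ : ∀ l, A ((t⁻¹ * t') l) = A l := fun l => by simpa using congrFun hword (t' l)
  exact inv_mul_eq_one.1 (ht.eq_one_of_mul (by simpa using ht') hξ)

section Descent

variable {ι β : Type*} [Fintype ι] [LinearOrder ι] [LocallyFiniteOrder ι] [LinearOrder β]

def BlockSwapStep (A : ι → β) (σ σ' : Perm ι) : Prop :=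
  BlockIncreasing A σ ∧ BlockIncreasing A σ' ∧ (σ' * σ⁻¹).IsSwap

instance (A : ι → β) : Std.Symm (BlockSwapStep A) where
  symm σ σ' := fun ⟨hσ, hσ', x, y, hxy, he⟩ =>
    ⟨hσ', hσ, x, y, hxy, by rw [← swap_inv, ← he, mul_inv_rev, inv_inv]⟩

theorem BlockIncreasing.exists_reflTransGen_monotone {A : ι → β} {σ : Perm ι}
    (hσ : BlockIncreasing A σ) :
    ∃ t, ReflTransGen (BlockSwapStep A) σ t ∧ BlockIncreasing A t ∧ Monotone (A ∘ ⇑t⁻¹) := by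
  induction hn : #(inversions (A ∘ ⇑σ⁻¹)) using Nat.strong_induction_on generalizing σ with
  | _ n ih =>
  subst hn
  by_cases hmono : Monotone (A ∘ ⇑σ⁻¹)
  · exact ⟨σ, .refl, hσ, hmono⟩
  obtain ⟨a, b, hab, hlt⟩ : ∃ a b, a ⋖ b ∧ A (σ⁻¹ b) < A (σ⁻¹ a) := by
    simpa [monotone_iff_forall_covBy] using hmono
  have hσ' := hσ.swap_mul hab hlt.ne'
  have hword : A ∘ ⇑(swap a b * σ)⁻¹ = (A ∘ ⇑σ⁻¹) ∘ swap a b := by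
    ext; simp [swap_inv]
  have hdec : #(inversions (A ∘ ⇑(swap a b * σ)⁻¹)) < #(inversions (A ∘ ⇑σ⁻¹)) := by
    rw [hword]
    exact card_inversions_comp_swap_lt hab.lt hlt
  obtain ⟨t, hσt, ht, htmono⟩ := ih _ hdec hσ' rfl
  exact ⟨t, .head ⟨hσ, hσ', a, b, hab.ne, mul_inv_cancel_right _ _⟩ hσt, ht, htmono⟩

end Descent

/-- any two elements τ', τ of D_A are connected by a chain in D_A in which
consecutive elements differ (on the left) by a transposition. -/
theorem stmt_3 (m : ℕ) (A : Fin m → ℕ) (τ τ' : Equiv.Perm (Fin m))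
    (hτ : inDA A τ) (hτ' : inDA A τ') :
    ∃ (l : ℕ) (f : ℕ → Equiv.Perm (Fin m)),
      f 0 = τ' ∧ f l = τ ∧ (∀ j ≤ l, inDA A (f j)) ∧
      ∀ j < l, (f (j + 1) * (f j)⁻¹).IsSwap := by
  obtain ⟨t, hτt, ht, hmono⟩ := hτ.blockIncreasing.exists_reflTransGen_monotone
  obtain ⟨t', hτ't', ht', hmono'⟩ := hτ'.blockIncreasing.exists_reflTransGen_monotone
  obtain rfl : t = t' := ht.eq_of_monotone ht' hmono hmono'
  obtain ⟨l, f, hf0, hfl, hstep⟩ := (hτ't'.trans (Std.Symm.symm _ _ hτt)).exists_nat_chain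
  refine ⟨l, f, hf0, hfl, ?_, fun j hj => (hstep j hj).2.2⟩
  rintro (_ | j) hj
  · exact hf0 ▸ hτ'
  · exact (hstep j hj).2.1.inDA
end

section
/- With M(μ) as defined via minimal-inversion coset representatives and the q-weighted symmetrization M(μ) = ∑_{σ ∈ D^μ} q^{-inv(σ)} σ(v(μ)), for weakly increasing ī, j̄ ∈ 𝓦_m with equal multiset-transition structure, the operator ẽ_{j̄ī} = ∑_{τ ∈ D_{j̄}} q^{-d_ī(τ)} e_{τ(j̄)τ(ī)} satisfies ẽ_{j̄ī} M(ī) = M(j̄), where e_{ab} = e_{a_1b_1} ⊗ ⋯ ⊗ e_{a_mb_m} are elementary matrix tensors and d_ī(τ) = inv(ξ) for the unique factorization τ = σξ with σ ∈ D_ī, ξ ∈ H_ī. -/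
/-- D_ī ⊂ S_m: minimal-inversion left coset representatives of the stabilizer H_ī -/
def Dset {N m : ℕ} (i : Fin m → Fin (N + 1)) : Finset (Equiv.Perm (Fin m)) :=
  Finset.univ.filter fun σ =>
    ∀ ρ : Equiv.Perm (Fin m),
      (∃ ξ : Equiv.Perm (Fin m), (∀ l, i (ξ l) = i l) ∧ ρ = σ * ξ) →
      invNum σ ≤ invNum ρ

/-- basis tensor I_{i_1} ⊗ ⋯ ⊗ I_{i_m}, as a delta function on basis indices -/
noncomputable def deltaT {N m : ℕ} (i : Fin m → Fin (N + 1)) :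
    (Fin m → Fin (N + 1)) → ℂ :=
  fun x => if x = i then 1 else 0

/-- M(ī) = ∑_{σ ∈ D_ī} q^{-inv(σ)} σ(v(ī)) -/
noncomputable def Mvec {N m : ℕ} (q : ℂ) (i : Fin m → Fin (N + 1)) :
    (Fin m → Fin (N + 1)) → ℂ :=
  ∑ σ ∈ Dset i, (q⁻¹) ^ (invNum σ) • deltaT (i ∘ ⇑σ⁻¹)

/-- the matrix-unit tensor e_{a_1 b_1} ⊗ ⋯ ⊗ e_{a_m b_m}, sending the basis tensor
indexed by b to the one indexed by a and killing the other basis tensors -/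
noncomputable def eMat {N m : ℕ} (a b : Fin m → Fin (N + 1)) :
    ((Fin m → Fin (N + 1)) → ℂ) → ((Fin m → Fin (N + 1)) → ℂ) :=
  fun f y => if y = a then f b else 0

/-!
For weakly increasing `ī`, every `τ ∈ S_m` factors as `τ = σξ` with `ξ ∈ H_ī` and `σ` increasing
on each fibre of `ī`. Inversions of `τ` between different fibres are exactly those of `σ`, and
inversions inside a fibre are exactly those of `ξ`, so `inv(τ) = inv(σ) + inv(ξ)`. Consequently
`D_ī` consists of the fibrewise increasing permutations, the factorization is unique, and the
coefficient of `M(ī)` at `τ(ī)` is `q^{-inv(σ)}`. The `τ`-term of `ẽ_{j̄ī} M(ī)` is therefore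
`q^{-inv(ξ)} q^{-inv(σ)} τ(v(j̄)) = q^{-inv(τ)} τ(v(j̄))`, the `τ`-term of `M(j̄)`.
-/

open Finset

theorem comp_inv_eq_comp_inv_iff {α β : Type*} (i : α → β) (σ σ' : Equiv.Perm α) :
    i ∘ ⇑σ⁻¹ = i ∘ ⇑σ'⁻¹ ↔ ∀ l, i ((σ⁻¹ * σ') l) = i l := by
  constructor
  · intro h l
    simpa using congrFun h (σ' l)
  · intro h
    funext x
    simpa using h (σ'⁻¹ x)

theorem stab_inv {α β : Type*} {i : α → β} {ξ : Equiv.Perm α} (hξ : ∀ l, i (ξ l) = i l)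
    (l : α) : i (ξ⁻¹ l) = i l := by
  simpa using (hξ (ξ⁻¹ l)).symm

theorem eMat_eq_smul_deltaT {N m : ℕ} (a b : Fin m → Fin (N + 1))
    (f : (Fin m → Fin (N + 1)) → ℂ) : eMat a b f = f b • deltaT a := by
  funext y
  simp [eMat, deltaT]

section Inversions

variable {α : Type*} [LinearOrder α] {m : ℕ} {i : Fin m → α} {σ ξ : Equiv.Perm (Fin m)}

def FiberStrictMono (i : Fin m → α) (σ : Equiv.Perm (Fin m)) : Prop :=
  ∀ c, StrictMonoOn σ (i ⁻¹' {c})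

def fiberInvNum (i : Fin m → α) (τ : Equiv.Perm (Fin m)) : ℕ :=
  (univ.filter fun p : Fin m × Fin m => (p.1 < p.2 ∧ τ p.2 < τ p.1) ∧ i p.1 = i p.2).card

def crossInvNum (i : Fin m → α) (τ : Equiv.Perm (Fin m)) : ℕ :=
  (univ.filter fun p : Fin m × Fin m => (p.1 < p.2 ∧ τ p.2 < τ p.1) ∧ ¬ i p.1 = i p.2).card

theorem invNum_eq_fiberInvNum_add_crossInvNum (i : Fin m → α) (τ : Equiv.Perm (Fin m)) :
    invNum τ = fiberInvNum i τ + crossInvNum i τ := by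
  have h := card_filter_add_card_filter_not
    (s := univ.filter fun p : Fin m × Fin m => p.1 < p.2 ∧ τ p.2 < τ p.1)
    (fun p => i p.1 = i p.2)
  rw [filter_filter, filter_filter] at h
  exact h.symm

theorem Monotone.lt_iff_apply_lt_of_apply_ne (hi : Monotone i) {a b : Fin m}
    (h : i a ≠ i b) : a < b ↔ i a < i b :=
  ⟨fun hab => (hi hab.le).lt_of_ne h, hi.reflect_lt⟩

theorem stab_apply_lt_apply_iff (hi : Monotone i) (hξ : ∀ l, i (ξ l) = i l) {a b : Fin m}
    (h : i a ≠ i b) : ξ a < ξ b ↔ a < b := by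
  have h' : i (ξ a) ≠ i (ξ b) := by rwa [hξ, hξ]
  rw [hi.lt_iff_apply_lt_of_apply_ne h', hξ, hξ, hi.lt_iff_apply_lt_of_apply_ne h]

theorem crossInvNum_mul_stab (hi : Monotone i) (τ : Equiv.Perm (Fin m))
    (hξ : ∀ l, i (ξ l) = i l) : crossInvNum i (τ * ξ) = crossInvNum i τ := by
  refine card_equiv (ξ.prodCongr ξ) fun p => ?_
  simp only [mem_filter, mem_univ, true_and]
  simp only [Equiv.prodCongr_apply, Prod.map, Equiv.Perm.mul_apply, hξ]
  exact and_congr_left fun h => and_congr_left' (stab_apply_lt_apply_iff hi hξ h).symm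

theorem crossInvNum_stab (hi : Monotone i) (hξ : ∀ l, i (ξ l) = i l) : crossInvNum i ξ = 0 := by
  rw [crossInvNum, card_eq_zero, filter_eq_empty_iff]
  rintro p - ⟨⟨h1, h2⟩, h3⟩
  exact h2.not_gt ((stab_apply_lt_apply_iff hi hξ h3).2 h1)

theorem FiberStrictMono.fiberInvNum_eq_zero (hσ : FiberStrictMono i σ) : fiberInvNum i σ = 0 := by
  rw [fiberInvNum, card_eq_zero, filter_eq_empty_iff]
  rintro p - ⟨⟨h1, h2⟩, h3⟩
  exact h2.not_gt (hσ (i p.1) rfl h3.symm h1)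

theorem FiberStrictMono.fiberInvNum_mul_stab (hσ : FiberStrictMono i σ)
    (hξ : ∀ l, i (ξ l) = i l) : fiberInvNum i (σ * ξ) = fiberInvNum i ξ := by
  rw [fiberInvNum, fiberInvNum]
  congr 1
  refine filter_congr fun p _ => and_congr_left fun h => and_congr_right' ?_
  exact (hσ (i p.1)).lt_iff_lt ((hξ p.2).trans h.symm) (hξ p.1)

theorem FiberStrictMono.invNum_mul_stab (hi : Monotone i) (hσ : FiberStrictMono i σ)
    (hξ : ∀ l, i (ξ l) = i l) : invNum (σ * ξ) = invNum σ + invNum ξ := by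
  rw [invNum_eq_fiberInvNum_add_crossInvNum i (σ * ξ), invNum_eq_fiberInvNum_add_crossInvNum i σ,
    invNum_eq_fiberInvNum_add_crossInvNum i ξ, hσ.fiberInvNum_mul_stab hξ,
    crossInvNum_mul_stab hi σ hξ, hσ.fiberInvNum_eq_zero, crossInvNum_stab hi hξ]
  ring

theorem eq_one_of_invNum_eq_zero (h : invNum σ = 0) : σ = 1 := by
  have hmono : StrictMono σ := by
    intro a b hab
    by_contra hba
    have hlt : σ b < σ a := (not_lt.1 hba).lt_of_ne (σ.injective.ne hab.ne')
    rw [invNum, card_eq_zero, filter_eq_empty_iff] at h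
    exact h (mem_univ (a, b)) ⟨hab, hlt⟩
  exact Equiv.ext (congrFun hmono.eq_id)

theorem exists_fiberStrictMono_mul_stab (hi : Monotone i) (τ : Equiv.Perm (Fin m)) :
    ∃ ρ ξ : Equiv.Perm (Fin m), FiberStrictMono i ρ ∧ (∀ l, i (ξ l) = i l) ∧ τ = ρ * ξ := by
  set f := i ∘ ⇑τ⁻¹
  set ρ := Tuple.sort f
  have hfτ : f ∘ ⇑τ = i := by
    funext l
    simp [f]
  have hfρ : f ∘ ⇑ρ = i :=
    (Tuple.unique_monotone (Tuple.monotone_sort f) (hfτ ▸ hi)).trans hfτ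
  refine ⟨ρ, ρ⁻¹ * τ, fun c a ha b hb hab => ?_, fun l => ?_, by group⟩
  · refine (Tuple.eq_sort_iff.1 rfl).2 a b hab ?_
    exact (congrFun hfρ a).trans (ha.trans hb.symm) |>.trans (congrFun hfρ b).symm
  · conv_lhs => rw [← hfρ]
    simp [f]

end Inversions

section CosetRepresentatives

variable {N m : ℕ} {i : Fin m → Fin (N + 1)} {σ ξ : Equiv.Perm (Fin m)}

theorem FiberStrictMono.eq_one_of_mul_stab_mem_Dset (hi : Monotone i) (hσ : FiberStrictMono i σ)
    (hξ : ∀ l, i (ξ l) = i l) (h : σ * ξ ∈ Dset i) : ξ = 1 := by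
  have hmin : invNum (σ * ξ) ≤ invNum σ :=
    (mem_filter.1 h).2 σ ⟨ξ⁻¹, stab_inv hξ, by group⟩
  rw [hσ.invNum_mul_stab hi hξ] at hmin
  exact eq_one_of_invNum_eq_zero (by omega)

theorem mem_Dset_iff (hi : Monotone i) : σ ∈ Dset i ↔ FiberStrictMono i σ := by
  constructor
  · intro hσ
    obtain ⟨ρ, ξ, hρ, hξ, rfl⟩ := exists_fiberStrictMono_mul_stab hi σ
    rwa [hρ.eq_one_of_mul_stab_mem_Dset hi hξ hσ, mul_one]
  · refine fun hσ => mem_filter.2 ⟨mem_univ σ, ?_⟩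
    rintro ρ ⟨ξ, hξ, rfl⟩
    rw [hσ.invNum_mul_stab hi hξ]
    exact Nat.le_add_right _ _

theorem Mvec_apply_comp_inv (hi : Monotone i) (q : ℂ) (hσ : σ ∈ Dset i) :
    Mvec q i (i ∘ ⇑σ⁻¹) = q⁻¹ ^ invNum σ := by
  rw [Mvec, Finset.sum_apply, sum_eq_single_of_mem σ hσ]
  · simp [deltaT]
  · intro σ' hσ' hne
    suffices i ∘ ⇑σ⁻¹ ≠ i ∘ ⇑σ'⁻¹ by simp [deltaT, this, -Equiv.Perm.coe_inv]
    intro h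
    have hξ := (comp_inv_eq_comp_inv_iff i σ σ').1 h
    have hmem : σ * (σ⁻¹ * σ') ∈ Dset i := by rwa [mul_inv_cancel_left]
    have := ((mem_Dset_iff hi).1 hσ).eq_one_of_mul_stab_mem_Dset hi hξ hmem
    exact hne (by rw [← mul_inv_cancel_left σ σ', this, mul_one])

end CosetRepresentatives

theorem stmt_16_general (N m : ℕ) (q : ℂ)
    (i j : Fin m → Fin (N + 1)) (hi : Monotone i)
    (d : Equiv.Perm (Fin m) → ℕ)
    (hd : ∀ τ σ ξ : Equiv.Perm (Fin m), σ ∈ Dset i → (∀ l, i (ξ l) = i l) →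
      τ = σ * ξ → d τ = invNum ξ) :
    (∑ τ ∈ Dset j, (q⁻¹) ^ (d τ) • eMat (j ∘ ⇑τ⁻¹) (i ∘ ⇑τ⁻¹) (Mvec q i))
      = Mvec q j := by
  refine sum_congr rfl fun τ _ => ?_
  obtain ⟨ρ, ξ, hρ, hξ, rfl⟩ := exists_fiberStrictMono_mul_stab hi τ
  have hρD : ρ ∈ Dset i := (mem_Dset_iff hi).2 hρ
  have hcoset : i ∘ ⇑(ρ * ξ)⁻¹ = i ∘ ⇑ρ⁻¹ :=
    ((comp_inv_eq_comp_inv_iff i ρ (ρ * ξ)).2 (by simpa using hξ)).symm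
  rw [eMat_eq_smul_deltaT, hcoset, Mvec_apply_comp_inv hi q hρD, smul_smul, ← pow_add,
    hd _ ρ ξ hρD hξ rfl, hρ.invNum_mul_stab hi hξ, add_comm (invNum ξ)]

/-- ẽ_{j̄ī} = ∑_{τ ∈ D_{j̄}} q^{-d_ī(τ)} e_{τ(j̄) τ(ī)} satisfies
ẽ_{j̄ī} M(ī) = M(j̄), where d_ī(τ) = inv(ξ) for the unique factorization τ = σξ
with σ ∈ D_ī and ξ ∈ H_ī. -/
theorem stmt_16 (N m : ℕ) (q : ℂ) (hq : q ≠ 0)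
    (i j : Fin m → Fin (N + 1)) (hi : Monotone i) (hj : Monotone j)
    (d : Equiv.Perm (Fin m) → ℕ)
    (hd : ∀ τ σ ξ : Equiv.Perm (Fin m), σ ∈ Dset i → (∀ l, i (ξ l) = i l) →
      τ = σ * ξ → d τ = invNum ξ) :
    (∑ τ ∈ Dset j, (q⁻¹) ^ (d τ) • eMat (j ∘ ⇑τ⁻¹) (i ∘ ⇑τ⁻¹) (Mvec q i))
      = Mvec q j :=
  stmt_16_general N m q i j hi d hd
end
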